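/- arXiv:2306.12682 — 2 statements merged into one kernel-verified Lean document; each statement's English description precedes it below -/
import Mathlib

section
/- The number of permutations of [n] containing zero occurrences of the pattern 123 equals the n-th Catalan number (2n)!/(n!·(n+1)!). -/
def Avoid (l : List ℕ) : Prop := ∀ i j k : ℕ, ∀ (hij : i < j) (hjk : j < k) (hk : k < l.length),
  l[i]'(by omega) < l[j]'(by omega) → ¬ l[j]'(by omega) < l[k]

def DecRel (t : ℕ) : ℕ → ℕ → Prop := fun x y => t ≤ x → t ≤ y → y ≤ x

def DecT (t : ℕ) (l : List ℕ) : Prop := l.Pairwise (DecRel t)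

def Good (t : ℕ) (l : List ℕ) : Prop := Avoid l ∧ DecT t l

lemma avoid_nil : Avoid [] := by intro i j k hij hjk hk; simp at hk

lemma good_nil (t : ℕ) : Good t [] := ⟨avoid_nil, List.Pairwise.nil⟩

lemma avoid_cons {a : ℕ} {r : List ℕ} :
    Avoid (a :: r) ↔ Avoid r ∧ r.Pairwise (DecRel (a+1)) := by
  constructor
  · intro h
    refine ⟨?_, ?_⟩
    · intro i j k hij hjk hk hxy
      have := h (i+1) (j+1) (k+1) (by omega) (by omega) (by simpa using Nat.succ_lt_succ hk)
      simpa using this (by simpa using hxy)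
    · rw [List.pairwise_iff_getElem]
      intro i j hi hj hij
      intro hax hay
      by_contra hlt
      push_neg at hlt
      have := h 0 (i+1) (j+1) (by omega) (by omega) (by simpa using Nat.succ_lt_succ hj)
      simp only [List.getElem_cons_zero, List.getElem_cons_succ] at this
      exact this hax hlt
  · rintro ⟨h1, h2⟩
    intro i j k hij hjk hk hxy hyz
    rw [List.pairwise_iff_getElem] at h2
    match i, j, k with
    | 0, j'+1, k'+1 =>
      simp only [List.getElem_cons_zero, List.getElem_cons_succ, List.length_cons] at hxy hyz hk
      have hjk' : j' < k' := by omega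
      have hk' : k' < r.length := by omega
      have := h2 j' k' (by omega) hk' hjk' (by omega) (by omega)
      omega
    | i'+1, j'+1, k'+1 =>
      simp only [List.getElem_cons_succ, List.length_cons] at hxy hyz hk
      exact h1 i' j' k' (by omega) (by omega) (by omega) hxy hyz

lemma good_cons_lt {k t : ℕ} {r : List ℕ} (h : k < t) :
    Good t (k :: r) ↔ Good (k+1) r := by
  unfold Good DecT
  rw [avoid_cons, List.pairwise_cons]
  constructor
  · rintro ⟨⟨hAr, hP⟩, _, hDr⟩
    exact ⟨hAr, hP⟩
  · rintro ⟨hAr, hP⟩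
    refine ⟨⟨hAr, hP⟩, ?_, ?_⟩
    · intro y _ htk _
      omega
    · exact hP.imp (fun {x y} hxy htx hty => hxy (by omega) (by omega))

lemma good_cons_ge {k t : ℕ} {r : List ℕ} (h : t ≤ k) (hr : ∀ y ∈ r, y ≠ k) :
    Good t (k :: r) ↔ (∀ y ∈ r, y < k) ∧ Good t r := by
  unfold Good DecT
  rw [avoid_cons, List.pairwise_cons]
  constructor
  · rintro ⟨⟨hAr, _⟩, hhead, hDr⟩
    refine ⟨?_, hAr, hDr⟩
    intro y hy
    rcases le_or_gt t y with hty | hty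
    · have := hhead y hy h hty
      have := hr y hy
      omega
    · omega
  · rintro ⟨hlt, hAr, hDr⟩
    refine ⟨⟨hAr, ?_⟩, ?_, hDr⟩
    · rw [List.pairwise_iff_getElem]
      intro i j hi hj hij hax _
      have := hlt _ (r.getElem_mem hi)
      omega
    · intro y hy _ _
      exact le_of_lt (hlt y hy)

open Classical in
noncomputable def permsOf (S : Finset ℕ) : Finset (List ℕ) :=
  ((S.sort (· ≤ ·)).permutations).toFinset

lemma mem_permsOf {S : Finset ℕ} {l : List ℕ} :
    l ∈ permsOf S ↔ (l : Multiset ℕ) = S.val := by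
  rw [permsOf, List.mem_toFinset, List.mem_permutations]
  have h2 : (S.sort (· ≤ ·)).Perm S.toList := Finset.sort_perm_toList _ _
  have h3 : ((S.sort (· ≤ ·) : List ℕ)  : Multiset ℕ) = S.val := by
    rw [← Multiset.coe_eq_coe] at h2
    rw [h2, Finset.toList, Multiset.coe_toList]
  rw [← h3, Multiset.coe_eq_coe]

lemma length_of_mem_permsOf {S : Finset ℕ} {l : List ℕ} (h : l ∈ permsOf S) :
    l.length = S.card := by
  rw [mem_permsOf] at h
  have := congrArg Multiset.card h
  simpa using this

lemma mem_iff_of_mem_permsOf {S : Finset ℕ} {l : List ℕ} (h : l ∈ permsOf S) {x : ℕ} :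
    x ∈ l ↔ x ∈ S := by
  rw [mem_permsOf] at h
  rw [show (x ∈ S) = (x ∈ S.val) from rfl, ← h]
  simp

lemma cons_mem_permsOf {S : Finset ℕ} {k : ℕ} {r : List ℕ} (hk : k ∈ S) :
    (k :: r) ∈ permsOf S ↔ r ∈ permsOf (S.erase k) := by
  rw [mem_permsOf, mem_permsOf, Finset.erase_val]
  have hcons : ((k :: r : List ℕ) : Multiset ℕ) = k ::ₘ (r : Multiset ℕ) := rfl
  rw [hcons]
  constructor
  · intro h
    rw [← h, Multiset.erase_cons_head]
  · intro h
    rw [h, Multiset.cons_erase (by simpa using hk)]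

open Classical in
noncomputable def goodF (S : Finset ℕ) (t : ℕ) : Finset (List ℕ) :=
  (permsOf S).filter (fun l => Good t l)

noncomputable def cardF (S : Finset ℕ) (t : ℕ) : ℕ := (goodF S t).card

lemma permsOf_empty : permsOf ∅ = {([] : List ℕ)} := by
  ext l
  rw [mem_permsOf]
  simp [Multiset.coe_eq_zero]

lemma cardF_empty (t : ℕ) : cardF ∅ t = 1 := by
  classical
  rw [cardF, goodF, permsOf_empty]
  rw [Finset.filter_singleton]
  simp [good_nil]

lemma nodup_of_mem_permsOf {S : Finset ℕ} {l : List ℕ} (h : l ∈ permsOf S) : l.Nodup := by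
  rw [mem_permsOf] at h
  have : Multiset.Nodup (l : Multiset ℕ) := by rw [h]; exact S.nodup
  simpa using this

lemma goodF_fiber_card {S : Finset ℕ} {t k : ℕ} (hk : k ∈ S) :
    ((goodF S t).filter (fun l => l.headI = k)).card
      = if k < t then cardF (S.erase k) (k+1)
        else if (∀ y ∈ S.erase k, y < k) then cardF (S.erase k) t else 0 := by
  classical
  have hSne : S.Nonempty := ⟨k, hk⟩
  -- a common characterization of the fiber
  have fib_iff : ∀ l, l ∈ (goodF S t).filter (fun l => l.headI = k) ↔
      ∃ r, l = k :: r ∧ r ∈ permsOf (S.erase k) ∧ Good t (k :: r) := by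
    intro l
    simp only [Finset.mem_filter, goodF]
    constructor
    · rintro ⟨⟨hmem, hgood⟩, hhead⟩
      have hne : l ≠ [] := by
        intro h0
        have := length_of_mem_permsOf hmem
        rw [h0] at this
        simp at this
        have := Finset.card_pos.2 hSne
        omega
      obtain ⟨a, r, rfl⟩ := List.exists_cons_of_ne_nil hne
      simp only [List.headI_cons] at hhead
      subst hhead
      exact ⟨r, rfl, (cons_mem_permsOf hk).1 hmem, hgood⟩
    · rintro ⟨r, rfl, hmem, hgood⟩
      exact ⟨⟨(cons_mem_permsOf hk).2 hmem, hgood⟩, rfl⟩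
  by_cases hkt : k < t
  · rw [if_pos hkt, cardF]
    apply Finset.card_nbij' (i := List.tail) (j := (k :: ·))
    · intro l hl
      obtain ⟨r, rfl, hmem, hgood⟩ := (fib_iff l).1 hl
      simp only [List.tail_cons]
      rw [Finset.mem_coe, goodF, Finset.mem_filter]
      exact ⟨hmem, (good_cons_lt hkt).1 hgood⟩
    · intro r hr
      rw [Finset.mem_coe, goodF, Finset.mem_filter] at hr
      exact (fib_iff _).2 ⟨r, rfl, hr.1, (good_cons_lt hkt).2 hr.2⟩
    · intro l hl
      obtain ⟨r, rfl, _, _⟩ := (fib_iff l).1 hl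
      rfl
    · intro r _
      rfl
  · push_neg at hkt
    by_cases hmax : ∀ y ∈ S.erase k, y < k
    · rw [if_neg (by omega), if_pos hmax, cardF]
      apply Finset.card_nbij' (i := List.tail) (j := (k :: ·))
      · intro l hl
        obtain ⟨r, rfl, hmem, hgood⟩ := (fib_iff l).1 hl
        have hr : ∀ y ∈ r, y ≠ k := by
          intro y hy
          have : y ∈ S.erase k := (mem_iff_of_mem_permsOf hmem).1 hy
          exact Finset.ne_of_mem_erase this
        simp only [List.tail_cons]
        rw [Finset.mem_coe, goodF, Finset.mem_filter]
        exact ⟨hmem, ((good_cons_ge hkt hr).1 hgood).2⟩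
      · intro r hr
        rw [Finset.mem_coe, goodF, Finset.mem_filter] at hr
        have hlt : ∀ y ∈ r, y < k := by
          intro y hy
          exact hmax y ((mem_iff_of_mem_permsOf hr.1).1 hy)
        have hne : ∀ y ∈ r, y ≠ k := fun y hy => by have := hlt y hy; omega
        exact (fib_iff _).2 ⟨r, rfl, hr.1, (good_cons_ge hkt hne).2 ⟨hlt, hr.2⟩⟩
      · intro l hl
        obtain ⟨r, rfl, _, _⟩ := (fib_iff l).1 hl
        rfl
      · intro r _
        rfl
    · rw [if_neg (by omega), if_neg hmax]
      rw [Finset.card_eq_zero, Finset.eq_empty_iff_forall_notMem]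
      intro l hl
      obtain ⟨r, rfl, hmem, hgood⟩ := (fib_iff l).1 hl
      have hr : ∀ y ∈ r, y ≠ k := by
        intro y hy
        exact Finset.ne_of_mem_erase ((mem_iff_of_mem_permsOf hmem).1 hy)
      have := ((good_cons_ge hkt hr).1 hgood).1
      apply hmax
      intro y hy
      exact this y ((mem_iff_of_mem_permsOf hmem).2 hy)

lemma cardF_rec {S : Finset ℕ} (hS : S.Nonempty) (t : ℕ) :
    cardF S t = ∑ k ∈ S,
      (if k < t then cardF (S.erase k) (k+1)
        else if (∀ y ∈ S.erase k, y < k) then cardF (S.erase k) t else 0) := by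
  classical
  rw [cardF]
  rw [Finset.card_eq_sum_card_fiberwise (f := List.headI) (t := S) ?_]
  · exact Finset.sum_congr rfl (fun k hk => goodF_fiber_card hk)
  · intro l hl
    rw [Finset.mem_coe, goodF, Finset.mem_filter] at hl
    have hne : l ≠ [] := by
      intro h0
      have := length_of_mem_permsOf hl.1
      rw [h0] at this
      simp at this
      have := Finset.card_pos.2 hS
      omega
    obtain ⟨a, r, rfl⟩ := List.exists_cons_of_ne_nil hne
    simp only [List.headI_cons]
    exact (mem_iff_of_mem_permsOf hl.1).1 (by simp)

noncomputable def Fq (m j : ℕ) : ℚ := (j+1) * (Nat.choose (2*m - j) m) / (m+1)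

lemma Fq_self (m : ℕ) : Fq m m = 1 := by
  unfold Fq
  rw [show 2*m - m = m by omega, Nat.choose_self]
  push_cast
  field_simp

lemma Fq_zero_eq_one (m : ℕ) : Fq (m+1) 0 = Fq (m+1) 1 := by
  unfold Fq
  rw [Nat.sub_zero, show 2*(m+1) - 1 = 2*m+1 by omega]
  have h1 : Nat.choose (2*m+2) (m+1) = Nat.choose (2*m+1) m + Nat.choose (2*m+1) (m+1) :=
    Nat.choose_succ_succ _ _
  have h2 : Nat.choose (2*m+1) m = Nat.choose (2*m+1) (m+1) := by
    rw [← Nat.choose_symm (by omega : m+1 ≤ 2*m+1), show 2*m+1-(m+1) = m by omega]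
  rw [show 2*(m+1) = 2*m+2 by ring, h1, h2]
  push_cast
  ring

lemma Fq_pascal (a j' : ℕ) :
    Fq (j'+a+2) (j'+1) = Fq (j'+a+2) (j'+2) + Fq (j'+a+1) j' := by
  unfold Fq
  have e1 : 2*(j'+a+2) - (j'+1) = (j'+2*a+2) + 1 := by omega
  have e2 : 2*(j'+a+2) - (j'+2) = j'+2*a+2 := by omega
  have e3 : 2*(j'+a+1) - j' = j'+2*a+2 := by omega
  rw [e1, e2, e3]
  have pascal : Nat.choose ((j'+2*a+2)+1) ((j'+a+1)+1)
      = Nat.choose (j'+2*a+2) (j'+a+1) + Nat.choose (j'+2*a+2) ((j'+a+1)+1) :=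
    Nat.choose_succ_succ _ _
  have key : Nat.choose (j'+2*a+2) ((j'+a+1)+1) * ((j'+a+1)+1)
      = Nat.choose (j'+2*a+2) (j'+a+1) * (a+1) := by
    rw [Nat.choose_succ_right_eq, show (j'+2*a+2) - (j'+a+1) = a + 1 by omega]
  have keyQ : (Nat.choose (j'+2*a+2) ((j'+a+1)+1) : ℚ) * ((j':ℚ)+a+2)
      = (Nat.choose (j'+2*a+2) (j'+a+1) : ℚ) * ((a:ℚ)+1) := by
    exact_mod_cast congrArg (Nat.cast : ℕ → ℚ) key
  rw [show j'+a+2 = (j'+a+1)+1 by omega, pascal]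
  set x := (Nat.choose (j'+2*a+2) (j'+a+1) : ℚ)
  set y := (Nat.choose (j'+2*a+2) ((j'+a+1)+1) : ℚ)
  have ha2 : ((j':ℚ)+a+2) ≠ 0 := by positivity
  have ha3 : ((j':ℚ)+a+3) ≠ 0 := by positivity
  push_cast
  field_simp
  linear_combination (-1 : ℚ) * keyQ

lemma Icc_insert (j m : ℕ) (h : j ≤ m) : Finset.Icc j m = insert j (Finset.Icc (j+1) m) := by
  ext x; simp [Finset.mem_Icc]; omega

lemma Fq_sum (m : ℕ) : ∀ d j, j + d = m + 1 → 1 ≤ j →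
    Fq (m+1) j = Fq m (j-1) + ∑ i ∈ Finset.Icc j m, Fq m i := by
  intro d
  induction d with
  | zero =>
    intro j hj _
    have : j = m + 1 := by omega
    subst this
    rw [Fq_self, show m+1-1 = m from rfl, Fq_self]
    rw [Finset.Icc_eq_empty (by omega)]
    simp
  | succ d ih =>
    intro j hj hj1
    have hjm : j ≤ m := by omega
    obtain ⟨j', rfl⟩ : ∃ j', j = j' + 1 := ⟨j-1, by omega⟩
    obtain ⟨a, ha⟩ : ∃ a, m = j' + a + 1 := ⟨m - j' - 1, by omega⟩
    have hp : Fq (m+1) (j'+1) = Fq (m+1) (j'+2) + Fq m j' := by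
      rw [ha]; exact Fq_pascal a j'
    rw [hp, ih (j'+2) (by omega) (by omega)]
    rw [Icc_insert (j'+1) m hjm, Finset.sum_insert (by simp)]
    rw [show j'+2-1 = j'+1 from rfl, show j'+1-1 = j' from rfl]
    ring

lemma Fq_sum_zero (m : ℕ) :
    Fq (m+1) 0 = ∑ i ∈ Finset.Icc 0 m, Fq m i := by
  rw [Fq_zero_eq_one, Fq_sum m m 1 (by omega) le_rfl]
  rw [Icc_insert 0 m (by omega), Finset.sum_insert (by simp)]

lemma rankA_le {S : Finset ℕ} {k : ℕ} (hk : k ∈ S) :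
    ((S.erase k).filter (fun x => k+1 ≤ x)).card ≤ S.card - 1 := by
  classical
  calc ((S.erase k).filter (fun x => k+1 ≤ x)).card ≤ (S.erase k).card :=
        Finset.card_le_card (Finset.filter_subset _ _)
    _ = S.card - 1 := Finset.card_erase_of_mem hk

lemma rankA_anti {S : Finset ℕ} {k k' : ℕ} (hk : k ∈ S) (hk' : k' ∈ S) (hlt : k < k') :
    ((S.erase k').filter (fun x => k'+1 ≤ x)).card + 1
      ≤ ((S.erase k).filter (fun x => k+1 ≤ x)).card := by
  classical
  have hsub : insert k' ((S.erase k').filter (fun x => k'+1 ≤ x))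
      ⊆ (S.erase k).filter (fun x => k+1 ≤ x) := by
    intro x hx
    rw [Finset.mem_insert] at hx
    rcases hx with rfl | hx
    · rw [Finset.mem_filter, Finset.mem_erase]
      exact ⟨⟨by omega, hk'⟩, by omega⟩
    · rw [Finset.mem_filter, Finset.mem_erase] at hx ⊢
      obtain ⟨⟨hne, hxS⟩, hge⟩ := hx
      exact ⟨⟨by omega, hxS⟩, by omega⟩
  have hnot : k' ∉ (S.erase k').filter (fun x => k'+1 ≤ x) := by
    rw [Finset.mem_filter]
    rintro ⟨_, h⟩
    omega
  calc ((S.erase k').filter (fun x => k'+1 ≤ x)).card + 1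
      = (insert k' ((S.erase k').filter (fun x => k'+1 ≤ x))).card :=
        (Finset.card_insert_of_notMem hnot).symm
    _ ≤ _ := Finset.card_le_card hsub

lemma rankA_inj {S : Finset ℕ} {k k' : ℕ} (hk : k ∈ S) (hk' : k' ∈ S)
    (h : ((S.erase k).filter (fun x => k+1 ≤ x)).card
       = ((S.erase k').filter (fun x => k'+1 ≤ x)).card) : k = k' := by
  rcases lt_trichotomy k k' with hlt | heq | hlt
  · have := rankA_anti hk hk' hlt; omega
  · exact heq
  · have := rankA_anti hk' hk hlt; omega

theorem cardF_eq (S : Finset ℕ) : ∀ t : ℕ,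
    (cardF S t : ℚ) = Fq S.card ((S.filter (fun x => t ≤ x)).card) := by
  classical
  induction S using Finset.strongInduction with
  | _ S ih =>
    intro t
    rcases Finset.eq_empty_or_nonempty S with rfl | hS
    · rw [cardF_empty]
      simp [Fq]
    · obtain ⟨m, hm⟩ : ∃ m, S.card = m + 1 := by
        have := Finset.card_pos.2 hS
        exact ⟨S.card - 1, by omega⟩
      set j := (S.filter (fun x => t ≤ x)).card with hj
      have hjle : j ≤ m + 1 := by
        rw [hj, ← hm]
        exact Finset.card_le_card (Finset.filter_subset _ _)
      -- the recurrence, cast to ℚ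
      have hrec := cardF_rec hS t
      have hcast : (cardF S t : ℚ) = ∑ k ∈ S,
          (if k < t then (cardF (S.erase k) (k+1) : ℚ)
            else if (∀ y ∈ S.erase k, y < k) then (cardF (S.erase k) t : ℚ) else 0) := by
        rw [hrec]
        push_cast
        apply Finset.sum_congr rfl
        intro k _
        split_ifs <;> simp
      rw [hcast]
      -- apply IH to each term
      have hIH : ∀ k ∈ S, ∀ t' : ℕ, (cardF (S.erase k) t' : ℚ)
          = Fq m (((S.erase k).filter (fun x => t' ≤ x)).card) := by
        intro k hk t'
        rw [ih (S.erase k) (Finset.erase_ssubset hk) t', Finset.card_erase_of_mem hk, hm]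
        norm_num
      -- split the sum
      rw [← Finset.sum_filter_add_sum_filter_not S (fun k => k < t)]
      -- second sum
      have hsecond : (∑ k ∈ S.filter (fun k => ¬ k < t),
          (if k < t then (cardF (S.erase k) (k+1) : ℚ)
            else if (∀ y ∈ S.erase k, y < k) then (cardF (S.erase k) t : ℚ) else 0))
          = if j = 0 then 0 else Fq m (j - 1) := by
        by_cases hj0 : j = 0
        · rw [if_pos hj0]
          have hempty : S.filter (fun k => ¬ k < t) = ∅ := by
            have h1 : S.filter (fun k => ¬ k < t) = S.filter (fun x => t ≤ x) := by
              apply Finset.filter_congr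
              intro x _
              simp [not_lt]
            rw [h1, ← Finset.card_eq_zero, ← hj, hj0]
          rw [hempty, Finset.sum_empty]
        · rw [if_neg hj0]
          have hfilne : (S.filter (fun x => t ≤ x)).Nonempty :=
            Finset.card_pos.1 (by omega)
          obtain ⟨x0, hx0⟩ := hfilne
          rw [Finset.mem_filter] at hx0
          have hmax := S.max'_mem hS
          have htmax : t ≤ S.max' hS := le_trans hx0.2 (S.le_max' _ hx0.1)
          rw [Finset.sum_eq_single_of_mem (S.max' hS)
            (by rw [Finset.mem_filter]; exact ⟨hmax, by omega⟩) ?_]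
          · rw [if_neg (by omega), if_pos ?_]
            · rw [hIH _ hmax t]
              congr 1
              have : (S.erase (S.max' hS)).filter (fun x => t ≤ x)
                  = (S.filter (fun x => t ≤ x)).erase (S.max' hS) := by
                rw [Finset.filter_erase]
              rw [this, Finset.card_erase_of_mem (by rw [Finset.mem_filter]; exact ⟨hmax, htmax⟩), ← hj]
            · intro y hy
              rw [Finset.mem_erase] at hy
              have := S.le_max' y hy.2
              omega
          · intro k hkmem hkne
            rw [Finset.mem_filter] at hkmem
            rw [if_neg hkmem.2, if_neg ?_]
            intro hall
            have hmaxe : S.max' hS ∈ S.erase k := by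
              rw [Finset.mem_erase]
              exact ⟨fun h => hkne h.symm, hmax⟩
            have := hall _ hmaxe
            have := S.le_max' k hkmem.1
            omega
      rw [hsecond]
      -- first sum
      have hfirst : (∑ k ∈ S.filter (fun k => k < t),
          (if k < t then (cardF (S.erase k) (k+1) : ℚ)
            else if (∀ y ∈ S.erase k, y < k) then (cardF (S.erase k) t : ℚ) else 0))
          = ∑ i ∈ Finset.Icc j m, Fq m i := by
        rw [Finset.sum_congr rfl (g := fun k =>
            Fq m (((S.erase k).filter (fun x => k+1 ≤ x)).card)) ?_]
        · -- reindex by rank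
          apply Finset.sum_nbij (i := fun k => ((S.erase k).filter (fun x => k+1 ≤ x)).card)
          · intro k hkmem
            rw [Finset.mem_filter] at hkmem
            obtain ⟨hkS, hkt⟩ := hkmem
            rw [Finset.mem_Icc]
            constructor
            · -- j ≤ rank k
              apply Finset.card_le_card
              intro x hx
              rw [Finset.mem_filter] at hx
              rw [Finset.mem_filter, Finset.mem_erase]
              exact ⟨⟨by omega, hx.1⟩, by omega⟩
            · have := rankA_le hkS
              omega
          · intro k hk k' hk' heq
            rw [Finset.coe_filter, Set.mem_setOf_eq] at hk hk'
            exact rankA_inj hk.1 hk'.1 heq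
          · intro i hi
            rw [Finset.mem_coe, Finset.mem_Icc] at hi
            -- surjectivity via pigeonhole
            have hmapsto : ∀ k ∈ S, ((S.erase k).filter (fun x => k+1 ≤ x)).card
                ∈ Finset.range (m+1) := by
              intro k hk
              rw [Finset.mem_range]
              have := rankA_le hk
              omega
            have hsurj := Finset.surj_on_of_inj_on_of_card_le
              (s := S) (t := Finset.range (m+1))
              (fun k _ => ((S.erase k).filter (fun x => k+1 ≤ x)).card)
              (fun k hk => hmapsto k hk)
              (fun k k' hk hk' heq => rankA_inj hk hk' heq)
              (by rw [Finset.card_range, hm])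
            obtain ⟨k, hkS, hki⟩ := hsurj i (by rw [Finset.mem_range]; omega)
            have hki' : i = ((S.erase k).filter (fun x => k+1 ≤ x)).card := hki
            have hkt : k < t := by
              by_contra hge
              push_neg at hge
              -- then rank k < j
              have hsub : (S.erase k).filter (fun x => k+1 ≤ x)
                  ⊆ (S.filter (fun x => t ≤ x)).erase k := by
                intro x hx
                rw [Finset.mem_filter, Finset.mem_erase] at hx
                rw [Finset.mem_erase, Finset.mem_filter]
                exact ⟨by omega, hx.1.2, by omega⟩
              have hcard : ((S.erase k).filter (fun x => k+1 ≤ x)).card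
                  ≤ ((S.filter (fun x => t ≤ x)).erase k).card :=
                Finset.card_le_card hsub
              have hkj : k ∈ S.filter (fun x => t ≤ x) := by
                rw [Finset.mem_filter]; exact ⟨hkS, hge⟩
              rw [Finset.card_erase_of_mem hkj, ← hj] at hcard
              have hjpos : 0 < j := by rw [hj]; exact Finset.card_pos.2 ⟨k, hkj⟩
              omega
            exact ⟨k, by simp only [Finset.coe_filter, Set.mem_setOf_eq]; exact ⟨hkS, hkt⟩,
              hki'.symm⟩
          · intro k _
            rfl
        · intro k hkmem
          rw [Finset.mem_filter] at hkmem
          rw [if_pos hkmem.2]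
          exact hIH k hkmem.1 (k+1)
      rw [hfirst]
      rw [hm]
      by_cases hj0 : j = 0
      · rw [hj0, if_pos rfl]
        rw [hj0] at *
        rw [Fq_sum_zero m]
        ring
      · rw [if_neg hj0]
        rw [Fq_sum m (m + 1 - j) j (by omega) (by omega)]
        ring

/-- The number of occurrences of the pattern `τ` (a permutation of `Fin k`) in the
permutation `π` of `Fin n`. -/
noncomputable def numOcc {k n : ℕ} (τ : Equiv.Perm (Fin k)) (π : Equiv.Perm (Fin n)) : ℕ :=
  Nat.card {f : Fin k → Fin n // StrictMono f ∧ ∀ a b : Fin k, π (f a) < π (f b) ↔ τ a < τ b}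

lemma fin3_eq (a : Fin 3) : a = 0 ∨ a = 1 ∨ a = 2 := by
  fin_cases a
  · exact Or.inl rfl
  · exact Or.inr (Or.inl rfl)
  · exact Or.inr (Or.inr rfl)

lemma exists_triple_iff {n : ℕ} (π : Equiv.Perm (Fin n)) :
    (∃ f : Fin 3 → Fin n, StrictMono f ∧ ∀ a b : Fin 3, π (f a) < π (f b) ↔ a < b) ↔
    ∃ i j k : Fin n, i < j ∧ j < k ∧ π i < π j ∧ π j < π k := by
  constructor
  · rintro ⟨f, hf, hp⟩
    exact ⟨f 0, f 1, f 2, hf (by decide), hf (by decide),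
      (hp 0 1).2 (by decide), (hp 1 2).2 (by decide)⟩
  · rintro ⟨i, j, k, hij, hjk, h1, h2⟩
    rw [Fin.lt_def] at hij hjk h1 h2
    refine ⟨![i, j, k], ?_, ?_⟩
    · intro a b
      rcases fin3_eq a with rfl | rfl | rfl <;> rcases fin3_eq b with rfl | rfl | rfl <;>
        intro hab <;>
        simp only [Matrix.cons_val_zero, Matrix.cons_val_one, Matrix.cons_val_two,
          Matrix.head_cons, Matrix.tail_cons, Fin.lt_def, Fin.val_zero, Fin.val_one,
          Fin.val_two] at hab ⊢ <;>
        omega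
    · intro a b
      rcases fin3_eq a with rfl | rfl | rfl <;> rcases fin3_eq b with rfl | rfl | rfl <;>
        simp only [Matrix.cons_val_zero, Matrix.cons_val_one, Matrix.cons_val_two,
          Matrix.head_cons, Matrix.tail_cons, Fin.lt_def, Fin.val_zero, Fin.val_one,
          Fin.val_two] <;>
        omega

lemma numOcc_eq_zero_iff {n : ℕ} (π : Equiv.Perm (Fin n)) :
    numOcc (Equiv.refl (Fin 3)) π = 0 ↔
      ∀ i j k : Fin n, i < j → j < k → π i < π j → ¬ π j < π k := by
  rw [numOcc, Nat.card_eq_zero]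
  have hfin : ¬ Infinite {f : Fin 3 → Fin n //
      StrictMono f ∧ ∀ a b : Fin 3, π (f a) < π (f b) ↔ (Equiv.refl (Fin 3)) a < (Equiv.refl (Fin 3)) b} :=
    not_infinite_iff_finite.2 inferInstance
  rw [or_iff_left hfin, isEmpty_subtype]
  simp only [Equiv.refl_apply]
  constructor
  · intro h i j k hij hjk h1 h2
    exact h _ (((exists_triple_iff π).2 ⟨i, j, k, hij, hjk, h1, h2⟩).choose_spec)
  · intro h f hf
    obtain ⟨i, j, k, hij, hjk, h1, h2⟩ := (exists_triple_iff π).1 ⟨f, hf⟩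
    exact h i j k hij hjk h1 h2

lemma avoid_ofFn_iff {n : ℕ} (π : Equiv.Perm (Fin n)) :
    Avoid (List.ofFn (fun i => ((π i : Fin n) : ℕ))) ↔
      ∀ i j k : Fin n, i < j → j < k → π i < π j → ¬ π j < π k := by
  unfold Avoid
  simp only [List.getElem_ofFn, List.length_ofFn]
  constructor
  · intro h i j k hij hjk h1 h2
    have := h i.val j.val k.val hij hjk k.isLt
    simp only [Fin.eta, Fin.cast_mk] at this
    rw [Fin.lt_def] at h1 h2
    exact this (by simpa using h1) (by simpa using h2)
  · intro h i j k hij hjk hk h1 h2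
    have hi : i < n := by omega
    have hj : j < n := by omega
    have := h ⟨i, hi⟩ ⟨j, hj⟩ ⟨k, hk⟩ (by simpa [Fin.lt_def] using hij)
      (by simpa [Fin.lt_def] using hjk)
    rw [Fin.lt_def, Fin.lt_def] at this
    exact this (by simpa using h1) (by simpa using h2)

lemma ofFn_mem_permsOf {n : ℕ} (π : Equiv.Perm (Fin n)) :
    List.ofFn (fun i => ((π i : Fin n) : ℕ)) ∈ permsOf (Finset.range n) := by
  rw [mem_permsOf, Finset.range_val, ← Multiset.coe_range, Multiset.coe_eq_coe]
  apply List.perm_of_nodup_nodup_toFinset_eq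
  · rw [List.nodup_ofFn]
    exact Fin.val_injective.comp (π.injective)
  · exact List.nodup_range
  · ext x
    simp only [List.mem_toFinset, List.mem_ofFn, List.mem_range]
    constructor
    · rintro ⟨i, rfl⟩
      exact (π i).isLt
    · intro hx
      exact ⟨π.symm ⟨x, hx⟩, by simp⟩

lemma card_bridge (n : ℕ) :
    Nat.card {π : Equiv.Perm (Fin n) // numOcc (Equiv.refl (Fin 3)) π = 0}
      = cardF (Finset.range n) n := by
  classical
  rw [Nat.card_eq_fintype_card, Fintype.card_subtype, cardF]
  apply Finset.card_bij (i := fun π _ => List.ofFn (fun i => ((π i : Fin n) : ℕ)))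
  · intro π hπ
    rw [Finset.mem_filter] at hπ
    rw [goodF, Finset.mem_filter]
    refine ⟨ofFn_mem_permsOf π, ?_, ?_⟩
    · rw [avoid_ofFn_iff]
      exact (numOcc_eq_zero_iff π).1 hπ.2
    · rw [DecT, List.pairwise_iff_getElem]
      intro i j hi hj hij
      intro hni _
      simp only [List.getElem_ofFn] at hni
      exact absurd hni (not_le.2 (Fin.isLt _))
  · intro π _ π' _ heq
    have := List.ofFn_injective heq
    ext i
    have h2 := congrFun this i
    simpa using h2
  · intro l hl
    rw [goodF, Finset.mem_filter] at hl
    obtain ⟨hmem, hgood⟩ := hl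
    have hlen : l.length = n := by
      rw [length_of_mem_permsOf hmem, Finset.card_range]
    have hval : ∀ i : ℕ, ∀ h : i < l.length, l[i] < n := by
      intro i h
      have : l[i] ∈ l := l.getElem_mem h
      have := (mem_iff_of_mem_permsOf hmem).1 this
      simpa using this
    set f : Fin n → Fin n := fun i => ⟨l[i.val]'(by omega), hval _ _⟩ with hf
    have hinj : Function.Injective f := by
      intro a b hab
      have h1 : l[a.val]'(by omega) = l[b.val]'(by omega) := congrArg Fin.val hab
      have hnd := nodup_of_mem_permsOf hmem
      rw [List.nodup_iff_injective_get] at hnd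
      have := hnd (show l.get ⟨a.val, by omega⟩ = l.get ⟨b.val, by omega⟩ by
        simpa [List.get_eq_getElem] using h1)
      have := congrArg Fin.val this
      simp only at this
      exact Fin.ext this
    have hbij : Function.Bijective f := (Finite.injective_iff_bijective).1 hinj
    refine ⟨Equiv.ofBijective f hbij, ?_, ?_⟩
    · rw [Finset.mem_filter]
      refine ⟨Finset.mem_univ _, ?_⟩
      rw [numOcc_eq_zero_iff]
      intro i j k hij hjk h1 h2
      rw [Fin.lt_def] at hij hjk h1 h2
      simp only [Equiv.ofBijective_apply, hf] at h1 h2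
      exact hgood.1 i.val j.val k.val hij hjk (by omega) h1 h2
    · apply List.ext_getElem
      · simp [hlen]
      · intro i h1 h2
        simp only [List.getElem_ofFn, Equiv.ofBijective_apply, hf]

theorem count_av123_eq_catalan (n : ℕ) :
    (Nat.card {π : Equiv.Perm (Fin n) // numOcc (Equiv.refl (Fin 3)) π = 0} : ℚ) =
      (Nat.factorial (2 * n) : ℚ) /
        ((Nat.factorial n : ℚ) * (Nat.factorial (n + 1) : ℚ)) := by
  classical
  rw [card_bridge n, cardF_eq (Finset.range n) n]
  have hfil : (Finset.range n).filter (fun x => n ≤ x) = ∅ := by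
    rw [Finset.filter_eq_empty_iff]
    intro x hx
    rw [Finset.mem_range] at hx
    omega
  rw [hfil, Finset.card_empty, Finset.card_range, Fq]
  rw [Nat.sub_zero]
  have hkey : Nat.choose (2*n) n * (Nat.factorial n * Nat.factorial n) = Nat.factorial (2*n) := by
    have := Nat.choose_mul_factorial_mul_factorial (show n ≤ 2*n by omega)
    rw [show 2*n - n = n by omega] at this
    rw [← this]
    ring
  have hkeyQ : (Nat.choose (2*n) n : ℚ) * ((Nat.factorial n : ℚ) * (Nat.factorial n : ℚ))
      = (Nat.factorial (2*n) : ℚ) := by exact_mod_cast congrArg (Nat.cast : ℕ → ℚ) hkey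
  rw [Nat.factorial_succ]
  have h1 : (Nat.factorial n : ℚ) ≠ 0 := by positivity
  have h2 : ((n : ℚ) + 1) ≠ 0 := by positivity
  push_cast
  field_simp
  linear_combination hkeyQ
end

section
/- The generating function Ψ_1(x) = Σ_{n≥3} ψ_1(n) xⁿ, where ψ_1(n) = 6(2n−1)!/((n+3)!(n−3)!), satisfies the algebraic identity 2x³ Ψ_1(x) = (1−6x+9x²−2x³) − (1−4x+3x²)·√(1−4x), where √(1−4x) denotes the formal power series S(x) with S(0)=1 and S(x)² = 1−4x. -/
open PowerSeries

/-- ψ₁(n) = 6(2n−1)!/((n+3)!(n−3)!) for n ≥ 3, and 0 otherwise: the number of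
permutations of [n] with exactly one occurrence of the pattern 123. -/
noncomputable def psiOne (n : ℕ) : ℚ :=
  if 3 ≤ n then
    6 * (Nat.factorial (2 * n - 1) : ℚ) /
      ((Nat.factorial (n + 3) : ℚ) * (Nat.factorial (n - 3) : ℚ))
  else 0


open Finset

lemma cat_nat (n : ℕ) : (n+1) * catalan n * (n.factorial * n.factorial) = (2*n).factorial := by
  rw [succ_mul_catalan_eq_centralBinom, Nat.centralBinom]
  have := Nat.choose_mul_factorial_mul_factorial (show n ≤ 2*n by omega)
  rw [show 2*n - n = n by omega] at this
  rw [← this]; ring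

lemma cat_rat (n : ℕ) : (catalan n : ℚ) = ((2*n).factorial : ℚ) / (n.factorial * (n+1).factorial) := by
  have h := cat_nat n
  have h1 : ((n:ℚ)+1) * catalan n * (n.factorial * n.factorial) = ((2*n).factorial : ℚ) := by
    exact_mod_cast congrArg (Nat.cast : ℕ → ℚ) h
  have hf : ((n+1).factorial : ℚ) = (n+1) * n.factorial := by
    rw [Nat.factorial_succ]; push_cast; ring
  rw [hf]
  have hn : (n.factorial : ℚ) ≠ 0 := by positivity
  field_simp
  nlinarith [h1]


lemma psi_cat (k : ℕ) :
    psiOne (k+3) = (catalan (k+5) : ℚ) - 4 * catalan (k+4) + 3 * catalan (k+3) := by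
  have hA : (((2*k+5).factorial : ℚ)) ≠ 0 := by positivity
  have hB : ((k.factorial : ℚ)) ≠ 0 := by positivity
  rw [psiOne, if_pos (by omega : 3 ≤ k+3), cat_rat, cat_rat, cat_rat,
    show 2*(k+3)-1 = 2*k+5 by omega, show k+3+3 = k+6 from rfl, show k+3-3 = k by omega,
    show 2*(k+5) = 2*k+10 by ring, show 2*(k+4) = 2*k+8 by ring, show 2*(k+3) = 2*k+6 by ring]
  have e10 : ((2*k+10).factorial : ℚ)
      = (2*k+10)*(2*k+9)*(2*k+8)*(2*k+7)*(2*k+6)*((2*k+5).factorial) := by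
    rw [show 2*k+10 = 2*k+9+1 from rfl, Nat.factorial_succ, show 2*k+9 = 2*k+8+1 from rfl,
      Nat.factorial_succ, show 2*k+8 = 2*k+7+1 from rfl, Nat.factorial_succ,
      show 2*k+7 = 2*k+6+1 from rfl, Nat.factorial_succ, show 2*k+6 = 2*k+5+1 from rfl,
      Nat.factorial_succ]
    push_cast; ring
  have e8 : ((2*k+8).factorial : ℚ) = (2*k+8)*(2*k+7)*(2*k+6)*((2*k+5).factorial) := by
    rw [show 2*k+8 = 2*k+7+1 from rfl, Nat.factorial_succ, show 2*k+7 = 2*k+6+1 from rfl,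
      Nat.factorial_succ, show 2*k+6 = 2*k+5+1 from rfl, Nat.factorial_succ]
    push_cast; ring
  have e6 : ((2*k+6).factorial : ℚ) = (2*k+6)*((2*k+5).factorial) := by
    rw [show 2*k+6 = 2*k+5+1 from rfl, Nat.factorial_succ]; push_cast; ring
  have f3 : ((k+3).factorial : ℚ) = (k+3)*(k+2)*(k+1)*(k.factorial) := by
    rw [show k+3 = k+2+1 from rfl, Nat.factorial_succ, show k+2 = k+1+1 from rfl,
      Nat.factorial_succ, show k+1 = k+0+1 from rfl, Nat.factorial_succ]
    push_cast; ring
  have f4 : ((k+4).factorial : ℚ) = (k+4)*(k+3)*(k+2)*(k+1)*(k.factorial) := by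
    rw [show k+4 = k+3+1 from rfl, Nat.factorial_succ]; push_cast; rw [f3]; ring
  have f5 : ((k+5).factorial : ℚ) = (k+5)*(k+4)*(k+3)*(k+2)*(k+1)*(k.factorial) := by
    rw [show k+5 = k+4+1 from rfl, Nat.factorial_succ]; push_cast; rw [f4]; ring
  have f6 : ((k+6).factorial : ℚ) = (k+6)*(k+5)*(k+4)*(k+3)*(k+2)*(k+1)*(k.factorial) := by
    rw [show k+6 = k+5+1 from rfl, Nat.factorial_succ]; push_cast; rw [f5]; ring
  rw [show k+5+1 = k+6 from rfl, show k+4+1 = k+5 from rfl, show k+3+1 = k+4 from rfl,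
    e10, e8, e6, f3, f4, f5, f6]
  field_simp
  ring


noncomputable def Cat : PowerSeries ℚ := PowerSeries.mk (fun n => (catalan n : ℚ))

lemma XC2 : (X : PowerSeries ℚ) * Cat ^ 2 = Cat - 1 := by
  ext n
  cases n with
  | zero => simp [Cat, coeff_mk]
  | succ n =>
    rw [sq, coeff_succ_X_mul, PowerSeries.coeff_mul]
    simp only [Cat, coeff_mk, map_sub, PowerSeries.coeff_one, Nat.succ_ne_zero, if_false, sub_zero]
    rw [catalan_succ' n]
    push_cast
    rfl

lemma Tsq : ((1 : PowerSeries ℚ) - 2 * X * Cat) ^ 2 = 1 - 4 * X := by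
  have h : ((1 : PowerSeries ℚ) - 2 * X * Cat) ^ 2 = 1 - 4 * X * Cat + 4 * X * (X * Cat ^ 2) := by
    ring
  rw [h, XC2]; ring

lemma catalan_four : catalan 4 = 14 := by
  norm_num [catalan_eq_centralBinom_div, Nat.centralBinom, Nat.choose]

lemma catalan_five : catalan 5 = 42 := by
  norm_num [catalan_eq_centralBinom_div, Nat.centralBinom, Nat.choose]

lemma main' : (PowerSeries.mk psiOne) * X^3 * PowerSeries.C (R := ℚ) 2 =
    X^1 * PowerSeries.C (R := ℚ) (-2) + X^2 * PowerSeries.C (R := ℚ) 6 + X^3 * PowerSeries.C (R := ℚ) (-2) +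
    Cat * X^1 * PowerSeries.C (R := ℚ) 2 + Cat * X^2 * PowerSeries.C (R := ℚ) (-8) +
    Cat * X^3 * PowerSeries.C (R := ℚ) 6 := by
  ext n
  simp only [map_add, PowerSeries.coeff_mul_C, PowerSeries.coeff_mul_X_pow',
    PowerSeries.coeff_X_pow, Cat, coeff_mk]
  match n with
  | 0 => norm_num
  | 1 => norm_num
  | 2 => norm_num
  | 3 => norm_num [psiOne, catalan_two]
  | 4 => norm_num [psiOne, catalan_two, catalan_three]
  | 5 => norm_num [psiOne, catalan_two, catalan_three, catalan_four]
  | (m+6) =>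
    have h1 : ¬ ((m+6 : ℕ) = 1) := by omega
    have h2 : ¬ ((m+6 : ℕ) = 2) := by omega
    have h3 : ¬ ((m+6 : ℕ) = 3) := by omega
    simp only [if_pos (show 3 ≤ m+6 by omega), if_pos (show 1 ≤ m+6 by omega),
      if_pos (show 2 ≤ m+6 by omega), if_neg h1, if_neg h2, if_neg h3,
      show m+6-3 = m+3 by omega, show m+6-1 = m+5 by omega, show m+6-2 = m+4 by omega]
    have := psi_cat m
    linarith [psi_cat m]

theorem gf_one_occ_123 (S : PowerSeries ℚ)
    (h0 : PowerSeries.constantCoeff S = 1)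
    (hS : S ^ 2 = 1 - 4 * PowerSeries.X) :
    2 * PowerSeries.X ^ 3 * PowerSeries.mk psiOne =
      (1 - 6 * PowerSeries.X + 9 * PowerSeries.X ^ 2 - 2 * PowerSeries.X ^ 3) -
        (1 - 4 * PowerSeries.X + 3 * PowerSeries.X ^ 2) * S := by
  have hT : S = 1 - 2 * X * Cat := by
    have hz : (S - (1 - 2 * X * Cat)) * (S + (1 - 2 * X * Cat)) = 0 := by
      have : (S - (1 - 2 * X * Cat)) * (S + (1 - 2 * X * Cat))
          = S ^ 2 - (1 - 2 * X * Cat) ^ 2 := by ring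
      rw [this, hS, Tsq]; ring
    rcases mul_eq_zero.mp hz with h | h
    · exact sub_eq_zero.mp h
    · exfalso
      have := congrArg (PowerSeries.constantCoeff (R := ℚ)) h
      simp [h0, Cat, PowerSeries.constantCoeff_mk] at this
  rw [hT]
  have hm := main'
  have hC2 : (PowerSeries.C (R := ℚ)) 2 = (2 : PowerSeries ℚ) := map_ofNat _ 2
  have hC6 : (PowerSeries.C (R := ℚ)) 6 = (6 : PowerSeries ℚ) := map_ofNat _ 6
  have hCm2 : (PowerSeries.C (R := ℚ)) (-2) = (-2 : PowerSeries ℚ) := by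
    rw [map_neg, hC2]
  have hCm8 : (PowerSeries.C (R := ℚ)) (-8) = (-8 : PowerSeries ℚ) := by
    rw [map_neg, (map_ofNat (PowerSeries.C (R := ℚ)) 8 : _)]
  rw [hC2, hC6, hCm2, hCm8] at hm
  linear_combination hm
end
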